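/- If (X_a)_{a∈A} is a finite family of real random variables with E[exp(X_a²)] ≤ 2 for each a, then E[max_{a∈A} |X_a|] ≤ √(log(1 + |A|)). -/

import Mathlib

/-!
Let `M = max_a |X_a|`. Pointwise, `exp (M²) - 1 = max_a (exp (X_a²) - 1) ≤ ∑_a (exp (X_a²) - 1)`,
since every summand is nonnegative, so `E[exp (M²)] ≤ 1 + |A|`. As `x ↦ exp (x²)` is convex,
Jensen's inequality gives `exp ((E M)²) ≤ E[exp (M²)]`; taking logarithms and square roots
finishes the proof.
-/

open MeasureTheory Real Set

theorem convexOn_exp_sq : ConvexOn ℝ univ (fun x : ℝ => exp (x ^ 2)) :=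
  (convexOn_exp.subset (subset_univ _)
    (isPreconnected_univ.image _ (continuous_pow 2).continuousOn).convex).comp
    even_two.convexOn_pow (exp_monotone.monotoneOn _)

theorem abs_le_exp_sq (x : ℝ) : |x| ≤ exp (x ^ 2) := by
  nlinarith [add_one_le_exp (x ^ 2), sq_abs x, sq_nonneg (|x| - 1)]

theorem exp_sq_iSup_abs_le_one_add_sum {ι : Type*} [Fintype ι] (x : ι → ℝ) :
    exp ((⨆ a, |x a|) ^ 2) ≤ 1 + ∑ a, (exp (x a ^ 2) - 1) := by
  rcases isEmpty_or_nonempty ι with hι | hι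
  · simp [Real.iSup_of_isEmpty]
  obtain ⟨a, ha⟩ := exists_eq_ciSup_of_finite (f := fun a => |x a|)
  have hterm : exp (x a ^ 2) - 1 ≤ ∑ b, (exp (x b ^ 2) - 1) :=
    Finset.single_le_sum (fun b _ => sub_nonneg.2 (one_le_exp (sq_nonneg (x b))))
      (Finset.mem_univ a)
  rw [← ha, sq_abs]
  linarith

section Integrals

variable {Ω : Type*} [MeasurableSpace Ω] {μ : Measure Ω}

theorem sq_integral_le_log_integral_exp_sq [IsProbabilityMeasure μ] {Y : Ω → ℝ}
    (hY : AEStronglyMeasurable Y μ) (hexp : Integrable (fun ω => exp (Y ω ^ 2)) μ) :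
    (∫ ω, Y ω ∂μ) ^ 2 ≤ log (∫ ω, exp (Y ω ^ 2) ∂μ) := by
  have hYint : Integrable Y μ := hexp.mono' hY (ae_of_all _ fun ω => abs_le_exp_sq (Y ω))
  rw [le_log_iff_exp_le (integral_exp_pos hexp)]
  exact convexOn_exp_sq.map_integral_le (continuous_exp.comp (continuous_pow 2)).continuousOn
    isClosed_univ (ae_of_all _ fun _ => mem_univ _) hYint hexp

variable {ι : Type*} [Fintype ι] {f : ι → Ω → ℝ}

theorem integrable_one_add_sum_sub_one [IsFiniteMeasure μ] (hf : ∀ a, Integrable (f a) μ) :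
    Integrable (fun ω => 1 + ∑ a, (f a ω - 1)) μ :=
  (integrable_const 1).add (integrable_finsetSum _ fun a _ => (hf a).sub (integrable_const 1))

theorem integral_one_add_sum_sub_one_le [IsProbabilityMeasure μ] (hf : ∀ a, Integrable (f a) μ)
    (hle : ∀ a, ∫ ω, f a ω ∂μ ≤ 2) :
    ∫ ω, (1 + ∑ a, (f a ω - 1)) ∂μ ≤ 1 + Fintype.card ι := by
  have hsub : ∀ a, Integrable (fun ω => f a ω - 1) μ := fun a => (hf a).sub (integrable_const 1)
  rw [integral_add (integrable_const 1) (integrable_finsetSum _ fun a _ => hsub a),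
    integral_finsetSum _ fun a _ => hsub a]
  simp only [integral_sub (hf _) (integrable_const 1), integral_const, probReal_univ, one_smul]
  calc 1 + ∑ a, (∫ ω, f a ω ∂μ - 1) ≤ 1 + ∑ _a : ι, (1 : ℝ) := by
        gcongr with a
        linarith [hle a]
    _ = 1 + Fintype.card ι := by simp

end Integrals

theorem orlicz_subgaussian_maximal_bound_general {Ω : Type*} [MeasurableSpace Ω]
    (μ : Measure Ω) [IsProbabilityMeasure μ]
    {ι : Type*} [Fintype ι]
    (X : ι → Ω → ℝ)
    (hmeas : ∀ a, Measurable (X a))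
    (hint : ∀ a, Integrable (fun ω => Real.exp ((X a ω) ^ 2)) μ)
    (hmom : ∀ a, ∫ ω, Real.exp ((X a ω) ^ 2) ∂μ ≤ 2) :
    ∫ ω, (⨆ a, |X a ω|) ∂μ ≤ Real.sqrt (Real.log (1 + (Fintype.card ι : ℝ))) := by
  set M : Ω → ℝ := fun ω => ⨆ a, |X a ω|
  have hM : Measurable M := Measurable.iSup fun a => (hmeas a).abs
  have hdom := integrable_one_add_sum_sub_one (μ := μ) hint
  have hpt (ω : Ω) := exp_sq_iSup_abs_le_one_add_sum (X · ω)
  have hexpM : Integrable (fun ω => exp (M ω ^ 2)) μ :=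
    hdom.mono' (hM.pow_const 2).exp.aestronglyMeasurable
      (ae_of_all _ fun ω => by simpa only [norm_of_nonneg (exp_nonneg _)] using hpt ω)
  have hbound : ∫ ω, exp (M ω ^ 2) ∂μ ≤ 1 + Fintype.card ι :=
    (integral_mono hexpM hdom hpt).trans (integral_one_add_sum_sub_one_le hint hmom)
  calc ∫ ω, M ω ∂μ ≤ √(log (∫ ω, exp (M ω ^ 2) ∂μ)) :=
        (le_abs_self _).trans
          (abs_le_sqrt (sq_integral_le_log_integral_exp_sq hM.aestronglyMeasurable hexpM))
    _ ≤ √(log (1 + Fintype.card ι)) := by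
        gcongr
        exact integral_exp_pos hexpM

/-- if E[exp(X_a²)] ≤ 2 for each a in a finite family, then
E[max_a |X_a|] ≤ √(log(1 + |𝒜|)). -/
theorem orlicz_subgaussian_maximal_bound {Ω : Type*} [MeasurableSpace Ω]
    (μ : Measure Ω) [IsProbabilityMeasure μ]
    {ι : Type*} [Fintype ι] [Nonempty ι]
    (X : ι → Ω → ℝ)
    (hmeas : ∀ a, Measurable (X a))
    (hint : ∀ a, Integrable (fun ω => Real.exp ((X a ω) ^ 2)) μ)
    (hmom : ∀ a, ∫ ω, Real.exp ((X a ω) ^ 2) ∂μ ≤ 2) :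
    ∫ ω, (⨆ a, |X a ω|) ∂μ ≤ Real.sqrt (Real.log (1 + (Fintype.card ι : ℝ))) :=
  orlicz_subgaussian_maximal_bound_general μ X hmeas hint hmom
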